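/- Let a(h,k) = |ψ(h,k)|. Then a(0,0) = 1, and for all natural numbers h ≤ k with k ≥ 1, a(h,k) = 2(k−h)·a(0,k−1) + 1. Moreover, for all k, a(0,k) = ∑_{ℓ=0}^{k} 2^k·k!/(2^ℓ·ℓ!) = ⌊2^k·k!·√e⌋. -/

import Mathlib

/-!
Since φ(h) = S⁻¹(φ^h(00))·(h+1), and rotating a word only permutes the images of its letters,
|φ^(d+1)(h)| = 2|φ^(h+d)(0)| + |φ^d(h+1)|; unrolling this in d gives
a(h,k) = 2(k−h)·a(0,k−1) + 1. The sums 2^k·k!·∑_{ℓ≤k} 2^(−ℓ)/ℓ! satisfy the same recurrence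
a(0,k+1) = 2(k+1)·a(0,k) + 1, and they are the floors of 2^k·k!·e^(1/2), because the tail of
the exponential series at 1/2, scaled by 2^k·k!, is less than 1.
That φ is well defined rests on φ^j(00) only containing letters ≤ j.
-/

/-- S⁻¹: move the last letter of a nonempty word to the front. -/
def sInv (w : List ℕ) : List ℕ := w.rotate (w.length - 1)

/-- Apply a substitution `f` letterwise to a word (the morphism determined by `f`). -/
def applyM (f : ℕ → List ℕ) (w : List ℕ) : List ℕ := (w.map f).flatten

/-- Fuel-indexed approximation of the morphism φ: `phiAux n` agrees with φ on all
letters `c < n`.  (Computing φ^c(00) only uses φ on letters smaller than `c`, so the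
recursion is well-founded in the fuel.) -/
def phiAux : ℕ → ℕ → List ℕ
  | 0, _ => []
  | n + 1, c => sInv ((applyM (phiAux n))^[c] [0, 0]) ++ [c + 1]

/-- The morphism φ on letters: φ(h) = S⁻¹(φ^h(00))·(h+1).
In particular φ(0) = 001 and φ(1) = 1001002. -/
def phi (c : ℕ) : List ℕ := phiAux (c + 1) c

/-- The morphism φ on words. -/
def phiW (w : List ℕ) : List ℕ := applyM phi w

/-- ψ(h,k) = φ^(k−h)(h). -/
def psi (h k : ℕ) : List ℕ := phiW^[k - h] [h]

/-- a(h,k) = |ψ(h,k)|. -/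
def a (h k : ℕ) : ℕ := (psi h k).length

section Substitution

variable {f g : ℕ → List ℕ}

lemma applyM_append (f : ℕ → List ℕ) (u v : List ℕ) :
    applyM f (u ++ v) = applyM f u ++ applyM f v := by
  simp [applyM]

lemma iterate_applyM_append (f : ℕ → List ℕ) (d : ℕ) (u v : List ℕ) :
    (applyM f)^[d] (u ++ v) = (applyM f)^[d] u ++ (applyM f)^[d] v := by
  induction d generalizing u v with
  | zero => rfl
  | succ d ih => simp only [Function.iterate_succ_apply, applyM_append, ih]

lemma List.Perm.iterate_applyM {u v : List ℕ} (huv : u.Perm v) (d : ℕ) :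
    ((applyM f)^[d] u).Perm ((applyM f)^[d] v) := by
  induction d generalizing u v with
  | zero => exact huv
  | succ d ih => exact ih ((huv.map f).flatten)

lemma applyM_congr {w : List ℕ} (h : ∀ x ∈ w, f x = g x) : applyM f w = applyM g w := by
  rw [applyM, applyM, List.map_congr_left h]

lemma length_iterate_applyM_sInv (d : ℕ) (w : List ℕ) :
    ((applyM f)^[d] (sInv w)).length = ((applyM f)^[d] w).length :=
  ((w.rotate_perm _).iterate_applyM d).length_eq

lemma mem_applyM {w : List ℕ} {x : ℕ} : x ∈ applyM f w ↔ ∃ c ∈ w, x ∈ f c := by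
  simp [applyM]

lemma le_add_of_mem_iterate_applyM (hf : ∀ c, ∀ x ∈ f c, x ≤ c + 1) {w : List ℕ} {m : ℕ}
    (hw : ∀ x ∈ w, x ≤ m) (j : ℕ) : ∀ x ∈ (applyM f)^[j] w, x ≤ m + j := by
  induction j with
  | zero => exact hw
  | succ j ih =>
    intro x hx
    rw [Function.iterate_succ_apply', mem_applyM] at hx
    obtain ⟨c, hc, hxc⟩ := hx
    have := ih c hc
    have := hf c x hxc
    omega

lemma iterate_applyM_congr (hf : ∀ c, ∀ x ∈ f c, x ≤ c + 1) {w : List ℕ} {m : ℕ}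
    (hw : ∀ x ∈ w, x ≤ m) {j : ℕ} (hfg : ∀ c < m + j, f c = g c) :
    (applyM f)^[j] w = (applyM g)^[j] w := by
  induction j with
  | zero => rfl
  | succ j ih =>
    rw [Function.iterate_succ_apply', Function.iterate_succ_apply',
      ← ih fun c hc => hfg c (by omega)]
    refine applyM_congr fun x hx => hfg x ?_
    have := le_add_of_mem_iterate_applyM hf hw j x hx
    omega

end Substitution

lemma phiAux_letters (n c : ℕ) : ∀ x ∈ phiAux n c, x ≤ c + 1 := by
  induction n generalizing c with
  | zero => simp [phiAux]
  | succ n ih =>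
    intro x hx
    simp only [phiAux, sInv, List.mem_append, List.mem_rotate, List.mem_singleton] at hx
    rcases hx with hx | rfl
    · have := le_add_of_mem_iterate_applyM ih (m := 0) (by simp) c x hx
      omega
    · rfl

lemma phiAux_eq_phi {c n : ℕ} (hcn : c < n) : phiAux n c = phi c := by
  induction c using Nat.strong_induction_on generalizing n with
  | _ c ih =>
    obtain ⟨n, rfl⟩ : ∃ n', n = n' + 1 := ⟨n - 1, by omega⟩
    have key : ∀ m, c ≤ m → (applyM (phiAux m))^[c] [0, 0] = phiW^[c] [0, 0] := fun m hm =>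
      iterate_applyM_congr (phiAux_letters m) (m := 0) (by simp)
        fun c' hc' => ih c' (by omega) (by omega)
    simp only [phi, phiAux]
    rw [key n (by omega), key c le_rfl]

lemma phi_eq (c : ℕ) : phi c = sInv (phiW^[c] [0, 0]) ++ [c + 1] := by
  rw [phi, phiAux, iterate_applyM_congr (phiAux_letters c) (m := 0) (by simp)
    fun c' hc' => phiAux_eq_phi (by omega)]
  rfl

lemma phiW_eq_applyM : phiW = applyM phi := rfl

lemma phiW_singleton (h : ℕ) : phiW [h] = phi h := by
  simp [phiW, applyM]

lemma length_iterate_phiW_succ (h d : ℕ) : (phiW^[d + 1] [h]).length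
    = 2 * (phiW^[h + d] [0]).length + (phiW^[d] [h + 1]).length := by
  rw [Function.iterate_succ_apply, phiW_singleton, phi_eq, phiW_eq_applyM,
    iterate_applyM_append, List.length_append, length_iterate_applyM_sInv,
    ← Function.iterate_add_apply, Nat.add_comm d h, show [0, 0] = [0] ++ [0] from rfl,
    iterate_applyM_append, List.length_append]
  ring

lemma length_iterate_phiW (h d : ℕ) :
    (phiW^[d + 1] [h]).length = 2 * (d + 1) * (phiW^[h + d] [0]).length + 1 := by
  induction d generalizing h with
  | zero => simpa using length_iterate_phiW_succ h 0
  | succ d ih =>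
    rw [length_iterate_phiW_succ, ih, show h + 1 + d = h + (d + 1) by omega]
    ring

lemma a_add_succ (h d : ℕ) : a h (h + d + 1) = 2 * (d + 1) * a 0 (h + d) + 1 := by
  simp only [a, psi, show h + d + 1 - h = d + 1 by omega, Nat.sub_zero, length_iterate_phiW]

open Finset Nat

lemma two_pow_mul_factorial_dvd {l k : ℕ} (hlk : l ≤ k) : 2 ^ l * l ! ∣ 2 ^ k * k ! :=
  mul_dvd_mul (pow_dvd_pow 2 hlk) (factorial_dvd_factorial hlk)

lemma sum_two_pow_mul_factorial_div_succ (k : ℕ) :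
    ∑ l ∈ range (k + 2), 2 ^ (k + 1) * (k + 1)! / (2 ^ l * l !)
      = 2 * (k + 1) * ∑ l ∈ range (k + 1), 2 ^ k * k ! / (2 ^ l * l !) + 1 := by
  rw [sum_range_succ, Nat.div_self (by positivity), mul_sum]
  congr 1
  refine sum_congr rfl fun l hl => ?_
  rw [factorial_succ, pow_succ, show 2 ^ k * 2 * ((k + 1) * k !) = 2 * (k + 1) * (2 ^ k * k !) by
    ring, Nat.mul_div_assoc _ (two_pow_mul_factorial_dvd (by simpa [Nat.lt_succ_iff] using hl))]

lemma cast_sum_two_pow_mul_factorial_div (k : ℕ) :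
    ((∑ l ∈ range (k + 1), 2 ^ k * k ! / (2 ^ l * l !) : ℕ) : ℝ)
      = 2 ^ k * k ! * ∑ l ∈ range (k + 1), (1 / 2 : ℝ) ^ l / l ! := by
  push_cast
  rw [mul_sum]
  refine sum_congr rfl fun l hl => ?_
  rw [Nat.cast_div (two_pow_mul_factorial_dvd (by simpa [Nat.lt_succ_iff] using hl))
    (by positivity)]
  push_cast
  rw [one_div_pow]
  field_simp

lemma two_pow_mul_factorial_mul_exp_half_lt (k : ℕ) :
    2 ^ k * k ! * Real.exp (1 / 2)
      < 2 ^ k * k ! * ∑ l ∈ range (k + 1), (1 / 2 : ℝ) ^ l / l ! + 1 := by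
  have hexp := Real.exp_bound' (x := 1 / 2) (by norm_num) (by norm_num) (n := k + 2) (by omega)
  rw [sum_range_succ] at hexp
  set c : ℝ := 2 ^ k * (k ! : ℝ)
  -- the two terms beyond the partial sum, scaled by c, are 1/(2(k+1)) and (k+3)/(4(k+1)(k+2)²)
  have htail : c * ((1 / 2 : ℝ) ^ (k + 1) / (k + 1)! + (1 / 2) ^ (k + 2) * (↑(k + 2) + 1)
      / ((k + 2)! * ↑(k + 2))) < 1 := by
    simp only [c, factorial_succ, pow_succ, one_div_pow]
    push_cast
    field_simp
    have hk : (0 : ℝ) ≤ k := k.cast_nonneg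
    nlinarith [mul_nonneg hk (sq_nonneg ((k : ℝ) + 2))]
  have := mul_le_mul_of_nonneg_left hexp (by positivity : (0 : ℝ) ≤ c)
  linarith

lemma a_zero_eq_sum (k : ℕ) : a 0 k = ∑ l ∈ range (k + 1), 2 ^ k * k ! / (2 ^ l * l !) := by
  induction k with
  | zero => rfl
  | succ k ih => simpa [sum_two_pow_mul_factorial_div_succ, ← ih] using a_add_succ 0 k

lemma floor_two_pow_mul_factorial_mul_sqrt_exp_one (k : ℕ) :
    ⌊(2 ^ k * k ! : ℝ) * Real.sqrt (Real.exp 1)⌋₊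
      = ∑ l ∈ range (k + 1), 2 ^ k * k ! / (2 ^ l * l !) := by
  rw [← Real.exp_half, Nat.floor_eq_iff (by positivity), cast_sum_two_pow_mul_factorial_div]
  exact ⟨mul_le_mul_of_nonneg_left (Real.sum_le_exp_of_nonneg (by norm_num) _) (by positivity),
    two_pow_mul_factorial_mul_exp_half_lt k⟩

/-- a(0,0) = 1; for h ≤ k with k ≥ 1, a(h,k) = 2(k−h)·a(0,k−1) + 1; and
a(0,k) = ∑_{ℓ=0}^{k} 2^k·k!/(2^ℓ·ℓ!) = ⌊2^k·k!·√e⌋. -/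
theorem a_recurrence_and_formula :
    a 0 0 = 1 ∧
    (∀ h k : ℕ, h ≤ k → 1 ≤ k → a h k = 2 * (k - h) * a 0 (k - 1) + 1) ∧
    (∀ k : ℕ, a 0 k = ∑ l ∈ Finset.range (k + 1),
        2 ^ k * Nat.factorial k / (2 ^ l * Nat.factorial l)) ∧
    (∀ k : ℕ, a 0 k =
        ⌊(2 ^ k * Nat.factorial k : ℝ) * Real.sqrt (Real.exp 1)⌋₊) := by
  refine ⟨rfl, fun h k hhk _ => ?_, a_zero_eq_sum, fun k => ?_⟩
  · obtain ⟨d, rfl⟩ := Nat.exists_eq_add_of_le hhk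
    cases d with
    | zero => simp [a, psi]
    | succ d => rw [← add_assoc, a_add_succ]; congr 3; omega
  · rw [a_zero_eq_sum, floor_two_pow_mul_factorial_mul_sqrt_exp_one]
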